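/- arXiv:2305.12176 — 3 statements merged into one kernel-verified Lean document; each statement's English description precedes it below -/
import Mathlib

section
/- Let A be a real m × n matrix, b ∈ ℝ^m, c ∈ ℝ^n. Suppose (y, u, v) with y ∈ ℝ^m and u, v ∈ ℝ^n satisfies Aᵀ y + u − v = c componentwise and u ≥ 0, v ≥ 0, and set z̄ := yᵀ b + uᵀ 𝟙 with 𝟙 the all-ones vector in ℝ^n. Let ẑ ∈ ℝ and let i be an index with u_i > z̄ − ẑ. Then every x ∈ ℝ^n satisfying A x = b, x_j ∈ {0,1} for all j, and cᵀ x ≥ ẑ must have x_i = 1. -/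
open Matrix

/-- Reduced-cost variable fixing (Mitchell 1997, part (a)): if u_i > z̄ − ẑ then
x_i = 1 in every binary feasible solution of value at least ẑ. -/
theorem stmt_5 (m n : ℕ) (A : Matrix (Fin m) (Fin n) ℝ) (b : Fin m → ℝ) (c : Fin n → ℝ)
    (y : Fin m → ℝ) (u v : Fin n → ℝ)
    (hdual : Aᵀ *ᵥ y + u - v = c) (hu : ∀ j, 0 ≤ u j) (hv : ∀ j, 0 ≤ v j)
    (zhat : ℝ) (i : Fin n)
    (hi : u i > (y ⬝ᵥ b + u ⬝ᵥ (fun _ => (1 : ℝ))) - zhat) :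
    ∀ x : Fin n → ℝ, A *ᵥ x = b → (∀ j, x j = 0 ∨ x j = 1) → c ⬝ᵥ x ≥ zhat →
      x i = 1 := by
  intro x hAx hbin hval
  rcases hbin i with hxi | hxi
  · exfalso
    have hx01 : ∀ j, 0 ≤ x j ∧ x j ≤ 1 := by
      intro j; rcases hbin j with h | h <;> simp [h]
    -- c ⬝ᵥ x = y ⬝ᵥ b + u ⬝ᵥ x - v ⬝ᵥ x
    have hc : c ⬝ᵥ x = y ⬝ᵥ b + u ⬝ᵥ x - v ⬝ᵥ x := by
      rw [← hdual, ← hAx]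
      simp [sub_dotProduct, add_dotProduct, dotProduct_mulVec, vecMul_transpose,
        mulVec_transpose, Matrix.dotProduct_mulVec]
    have hvx : 0 ≤ v ⬝ᵥ x := by
      apply Finset.sum_nonneg
      intro j _
      exact mul_nonneg (hv j) (hx01 j).1
    have hux : u ⬝ᵥ x ≤ u ⬝ᵥ (fun _ => (1 : ℝ)) - u i := by
      unfold dotProduct
      simp only [mul_one]
      have h1 : ∑ j, u j * x j = ∑ j ∈ Finset.univ.erase i, u j * x j := by
        rw [← Finset.add_sum_erase _ _ (Finset.mem_univ i), hxi, mul_zero, zero_add]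
      have h2 : ∑ j, u j = u i + ∑ j ∈ Finset.univ.erase i, u j := by
        rw [Finset.add_sum_erase _ _ (Finset.mem_univ i)]
      rw [h1, h2]
      have h3 : ∑ j ∈ Finset.univ.erase i, u j * x j ≤ ∑ j ∈ Finset.univ.erase i, u j := by
        apply Finset.sum_le_sum
        intro j _
        have := mul_le_mul_of_nonneg_left (hx01 j).2 (hu j)
        linarith
      linarith
    have : zhat ≤ y ⬝ᵥ b + (u ⬝ᵥ (fun _ => (1 : ℝ)) - u i) - 0 := by
      calc zhat ≤ c ⬝ᵥ x := hval
        _ = y ⬝ᵥ b + u ⬝ᵥ x - v ⬝ᵥ x := hc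
        _ ≤ _ := by linarith
    linarith
  · exact hxi
end

section
/- Let G be a simple graph on a finite vertex type V in which every vertex has positive degree (no isolated vertices). Let S be an independent set of G. Then there exists a function f assigning to each edge e of G an element of Option V such that whenever f e = some w, the vertex w is an endpoint of e, and such that a vertex u is 'served' by f (meaning f e = some u for every edge e incident to u) if and only if u ∈ S. -/
/-- Converse direction of the gadget correspondence: any independent set of a
graph without isolated vertices is exactly the served set of some valid edge
selection. -/
theorem stmt_8 {V : Type*} [Fintype V] (G : SimpleGraph V) [DecidableRel G.Adj]
    (hdeg : ∀ u : V, 0 < G.degree u)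
    (S : Set V) (hS : ∀ u ∈ S, ∀ w ∈ S, ¬ G.Adj u w) :
    ∃ f : G.edgeSet → Option V,
      (∀ e : G.edgeSet, ∀ w : V, f e = some w → w ∈ (e : Sym2 V)) ∧
      ∀ u : V, (∀ e : G.edgeSet, u ∈ (e : Sym2 V) → f e = some u) ↔ u ∈ S := by
  classical
  refine ⟨fun e => if h : ∃ w, w ∈ (e : Sym2 V) ∧ w ∈ S then some h.choose else none, ?_, ?_⟩
  · intro e w hw
    by_cases h : ∃ w, w ∈ (e : Sym2 V) ∧ w ∈ S
    · simp only [dif_pos h, Option.some.injEq] at hw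
      subst hw; exact h.choose_spec.1
    · simp [dif_neg h] at hw
  · intro u
    constructor
    · intro hall
      have hpos := hdeg u
      rw [← SimpleGraph.card_neighborFinset_eq_degree, Finset.card_pos] at hpos
      obtain ⟨v, hv⟩ := hpos
      rw [SimpleGraph.mem_neighborFinset] at hv
      have he : s(u, v) ∈ G.edgeSet := hv
      have hu := hall ⟨_, he⟩ (by simp)
      by_cases h : ∃ w, w ∈ ((⟨_, he⟩ : G.edgeSet) : Sym2 V) ∧ w ∈ S
      · simp only [dif_pos h, Option.some.injEq] at hu
        exact hu ▸ h.choose_spec.2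
      · simp only [dif_neg h] at hu
        exact nomatch hu
    · intro huS e hue
      have h : ∃ w, w ∈ (e : Sym2 V) ∧ w ∈ S := ⟨u, hue, huS⟩
      simp only [dif_pos h, Option.some.injEq]
      by_contra hne
      have hce := h.choose_spec.1
      have heq : (e : Sym2 V) = s(h.choose, u) :=
        (Sym2.mem_and_mem_iff hne).mp ⟨hce, hue⟩
      have hadj : G.Adj h.choose u := by
        have he := e.2
        rw [heq] at he
        exact he
      exact hS _ h.choose_spec.2 _ huS hadj
end

section
/- Let G be a simple graph on a finite vertex type V in which every vertex has positive degree (no isolated vertices). For a valid edge selection f (a function assigning to each edge e of G an element of Option V whose value, when it is some w, is an endpoint of e), let served(f) denote the set of vertices u such that f e = some u for every edge e incident to u. Then the maximum, over all valid edge selections f, of the cardinality of served(f) equals the maximum cardinality of an independent set of G. -/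
/-- Value preservation in the MISP-to-EVSP reduction: the maximum number of
vertices served by a valid edge selection equals the maximum size of an
independent set. -/
theorem stmt_10 {V : Type*} [Fintype V] (G : SimpleGraph V) [DecidableRel G.Adj]
    (hdeg : ∀ u : V, 0 < G.degree u) :
    sSup {k : ℕ | ∃ f : G.edgeSet → Option V,
        (∀ e : G.edgeSet, ∀ w : V, f e = some w → w ∈ (e : Sym2 V)) ∧
        {u : V | ∀ e : G.edgeSet, u ∈ (e : Sym2 V) → f e = some u}.ncard = k} =
    sSup {k : ℕ | ∃ S : Set V, (∀ u ∈ S, ∀ w ∈ S, ¬ G.Adj u w) ∧ S.ncard = k} := by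
  classical
  have hbdd1 : BddAbove {k : ℕ | ∃ f : G.edgeSet → Option V,
      (∀ e : G.edgeSet, ∀ w : V, f e = some w → w ∈ (e : Sym2 V)) ∧
      {u : V | ∀ e : G.edgeSet, u ∈ (e : Sym2 V) → f e = some u}.ncard = k} := by
    refine ⟨Nat.card V, ?_⟩
    rintro k ⟨f, hf, rfl⟩
    calc _ ≤ (Set.univ : Set V).ncard :=
          Set.ncard_le_ncard (Set.subset_univ _) Set.finite_univ
      _ = Nat.card V := Set.ncard_univ V
  have hbdd2 : BddAbove {k : ℕ | ∃ S : Set V,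
      (∀ u ∈ S, ∀ w ∈ S, ¬ G.Adj u w) ∧ S.ncard = k} := by
    refine ⟨Nat.card V, ?_⟩
    rintro k ⟨S, hS, rfl⟩
    calc _ ≤ (Set.univ : Set V).ncard :=
          Set.ncard_le_ncard (Set.subset_univ _) Set.finite_univ
      _ = Nat.card V := Set.ncard_univ V
  apply le_antisymm
  · apply csSup_le
    · exact ⟨_, ⟨fun _ => none, fun e w h => by simp at h, rfl⟩⟩
    · rintro k ⟨f, hf, rfl⟩
      apply le_csSup hbdd2
      refine ⟨_, ?_, rfl⟩
      intro u hu w hw hadj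
      have he : s(u, w) ∈ G.edgeSet := hadj
      have h1 := hu ⟨_, he⟩ (by simp)
      have h2 := hw ⟨_, he⟩ (by simp)
      rw [h1] at h2
      exact hadj.ne (Option.some_injective _ h2)
  · apply csSup_le
    · exact ⟨0, ∅, by simp⟩
    · rintro k ⟨S, hS, rfl⟩
      set f : G.edgeSet → Option V :=
        fun e => if h : ∃ u, u ∈ S ∧ u ∈ (e : Sym2 V) then some h.choose else none
        with hfdef
      have hval : ∀ e : G.edgeSet, ∀ w : V, f e = some w →
          w ∈ S ∧ w ∈ (e : Sym2 V) := by
        intro e w hw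
        simp only [hfdef] at hw
        split at hw
        · next h =>
            obtain rfl : h.choose = w := Option.some_injective _ hw
            exact h.choose_spec
        · cases hw
      have hsub : S ⊆ {u : V | ∀ e : G.edgeSet, u ∈ (e : Sym2 V) → f e = some u} := by
        intro u hu e hue
        have hex : ∃ v, v ∈ S ∧ v ∈ (e : Sym2 V) := ⟨u, hu, hue⟩
        have hfe : f e = some hex.choose := by
          simp only [hfdef]; rw [dif_pos hex]
        rw [hfe]
        obtain ⟨hv1, hv2⟩ := hex.choose_spec
        congr 1
        by_contra hne
        have heq : (e : Sym2 V) = s(hex.choose, u) :=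
          (Sym2.mem_and_mem_iff hne).mp ⟨hv2, hue⟩
        have hadj : G.Adj hex.choose u := by
          have := e.2
          rw [heq] at this
          exact this
        exact hS hex.choose hv1 u hu hadj
      calc S.ncard ≤ {u : V | ∀ e : G.edgeSet, u ∈ (e : Sym2 V) → f e = some u}.ncard :=
            Set.ncard_le_ncard hsub (Set.toFinite _)
        _ ≤ _ := le_csSup hbdd1 ⟨f, fun e w h => (hval e w h).2, rfl⟩
end
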